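/- arXiv:1411.1595 — 4 statements merged into one kernel-verified Lean document; each statement's English description precedes it below -/
import Mathlib

section
/- Let u : (0,1] → (0,1] be left continuous and non-decreasing with lower trace ů and upper trace ū (both Lebesgue measurable). Then ∫₀¹ ů(x) dx + ∫₀¹ ū(x) dx = 1. -/
open Set

noncomputable def lowerTrace (u : ℝ → ℝ) (x : ℝ) : ℝ :=
  sInf {y | y ∈ Ioc (0:ℝ) 1 ∧ u x ≤ u y}

noncomputable def upperTrace (u : ℝ → ℝ) (x : ℝ) : ℝ :=
  sSup {y | y ∈ Ioc (0:ℝ) 1 ∧ u y ≤ u x}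

section Aux

variable {u : ℝ → ℝ}

lemma upperSet_bddAbove (u : ℝ → ℝ) (x : ℝ) :
    BddAbove {y | y ∈ Ioc (0:ℝ) 1 ∧ u y ≤ u x} :=
  ⟨1, fun y hy => hy.1.2⟩

lemma lowerSet_bddBelow (u : ℝ → ℝ) (x : ℝ) :
    BddBelow {y | y ∈ Ioc (0:ℝ) 1 ∧ u x ≤ u y} :=
  ⟨0, fun y hy => hy.1.1.le⟩

lemma le_upperTrace {x : ℝ} (hx : x ∈ Ioc (0:ℝ) 1) : x ≤ upperTrace u x :=
  le_csSup (upperSet_bddAbove u x) ⟨hx, le_rfl⟩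

lemma upperTrace_le_one {x : ℝ} (hx : x ∈ Ioc (0:ℝ) 1) : upperTrace u x ≤ 1 :=
  csSup_le ⟨x, ⟨hx, le_rfl⟩⟩ (fun y hy => hy.1.2)

lemma lowerTrace_le {x : ℝ} (hx : x ∈ Ioc (0:ℝ) 1) : lowerTrace u x ≤ x :=
  csInf_le (lowerSet_bddBelow u x) ⟨hx, le_rfl⟩

lemma lowerTrace_nonneg {x : ℝ} (hx : x ∈ Ioc (0:ℝ) 1) : 0 ≤ lowerTrace u x :=
  le_csInf ⟨x, ⟨hx, le_rfl⟩⟩ (fun y hy => hy.1.1.le)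

/-- Section at `x` of the set `A`: equals `Ioc x (upperTrace u x)`. -/
lemma sectionA_eq (hmono : MonotoneOn u (Ioc (0:ℝ) 1))
    (hlc : ∀ x ∈ Ioc (0:ℝ) 1, ContinuousWithinAt u (Iio x) x)
    {x : ℝ} (hx : x ∈ Ioc (0:ℝ) 1) :
    {y | y ∈ Ioc (0:ℝ) 1 ∧ x < y ∧ u y ≤ u x} = Ioc x (upperTrace u x) := by
  have hne : Set.Nonempty {y | y ∈ Ioc (0:ℝ) 1 ∧ u y ≤ u x} := ⟨x, ⟨hx, le_rfl⟩⟩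
  -- any strict intermediate point is in the level set
  have hmid : ∀ w, x < w → w < upperTrace u x → u w ≤ u x := by
    intro w hxw hw
    obtain ⟨z, hz, hwz⟩ := exists_lt_of_lt_csSup hne hw
    have hwmem : w ∈ Ioc (0:ℝ) 1 := ⟨lt_trans hx.1 hxw, le_of_lt (lt_of_lt_of_le hwz hz.1.2)⟩
    exact le_trans (hmono hwmem hz.1 hwz.le) hz.2
  ext y
  simp only [mem_setOf_eq, mem_Ioc]
  constructor
  · rintro ⟨hy1, hy2, hy3⟩
    exact ⟨hy2, le_csSup (upperSet_bddAbove u x) ⟨hy1, hy3⟩⟩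
  · rintro ⟨hxy, hyu⟩
    have hy1 : y ∈ Ioc (0:ℝ) 1 := ⟨lt_trans hx.1 hxy, le_trans hyu (upperTrace_le_one hx)⟩
    refine ⟨hy1, hxy, ?_⟩
    rcases lt_or_eq_of_le hyu with h | h
    · exact hmid y hxy h
    · -- y = upperTrace u x; use left continuity at y
      have hxy' : x < upperTrace u x := h ▸ hxy
      have htend := hlc y hy1
      have hev : ∀ᶠ w in nhdsWithin y (Iio y), u w ≤ u x := by
        filter_upwards [Ioo_mem_nhdsLT_of_mem (show y ∈ Ioc x y from ⟨hxy, le_rfl⟩)]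
          with w hw
        exact hmid w hw.1 (h ▸ hw.2)
      have hne' : (nhdsWithin y (Iio y)).NeBot :=
        nhdsLT_neBot y
      exact le_of_tendsto htend hev

/-- Section at `y`: squeezed between `Ioo (lowerTrace u y) y` and `Icc (lowerTrace u y) y`. -/
lemma sectionB_subset (hmono : MonotoneOn u (Ioc (0:ℝ) 1)) {y : ℝ} (hy : y ∈ Ioc (0:ℝ) 1) :
    {x | x ∈ Ioc (0:ℝ) 1 ∧ x < y ∧ u y ≤ u x} ⊆ Icc (lowerTrace u y) y := by
  rintro x ⟨hx1, hx2, hx3⟩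
  exact ⟨csInf_le (lowerSet_bddBelow u y) ⟨hx1, hx3⟩, hx2.le⟩

lemma sectionB_supset (hmono : MonotoneOn u (Ioc (0:ℝ) 1)) {y : ℝ} (hy : y ∈ Ioc (0:ℝ) 1) :
    Ioo (lowerTrace u y) y ⊆ {x | x ∈ Ioc (0:ℝ) 1 ∧ x < y ∧ u y ≤ u x} := by
  rintro x ⟨h1, h2⟩
  have hx0 : 0 < x := lt_of_le_of_lt (lowerTrace_nonneg hy) h1
  have hx1 : x ∈ Ioc (0:ℝ) 1 := ⟨hx0, le_trans h2.le hy.2⟩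
  refine ⟨hx1, h2, ?_⟩
  have h1' : sInf {z | z ∈ Ioc (0:ℝ) 1 ∧ u y ≤ u z} < x := h1
  obtain ⟨z, hz, hzx⟩ := exists_lt_of_csInf_lt (s := {z | z ∈ Ioc (0:ℝ) 1 ∧ u y ≤ u z}) ⟨y, ⟨hy, le_rfl⟩⟩ h1'
  exact le_trans hz.2 (hmono hz.1 hx1 hzx.le)

end Aux

open MeasureTheory in
theorem stmt6 (u : ℝ → ℝ)
    (hmap : ∀ x ∈ Ioc (0:ℝ) 1, u x ∈ Ioc (0:ℝ) 1)
    (hmono : MonotoneOn u (Ioc (0:ℝ) 1))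
    (hlc : ∀ x ∈ Ioc (0:ℝ) 1, ContinuousWithinAt u (Iio x) x)
    (hml : Measurable (lowerTrace u)) (hmu : Measurable (upperTrace u)) :
    (∫ x in Ioc (0:ℝ) 1, lowerTrace u x) + (∫ x in Ioc (0:ℝ) 1, upperTrace u x) = 1 := by
  classical
  set A : Set (ℝ × ℝ) :=
    {p | p.1 ∈ Ioc (0:ℝ) 1 ∧ p.2 ∈ Ioc (0:ℝ) 1 ∧ p.1 < p.2 ∧ u p.2 ≤ u p.1} with hAdef
  -- a monotone global modification of u
  set v : ℝ → ℝ := fun x => if x ≤ 0 then 0 else u (min x 1) with hvdef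
  have hvmono : Monotone v := by
    intro a b hab
    by_cases hb : b ≤ 0
    · simp [hvdef, hb, le_trans hab hb]
    · push_neg at hb
      have hbmem : min b 1 ∈ Ioc (0:ℝ) 1 := ⟨lt_min hb one_pos, min_le_right _ _⟩
      by_cases ha : a ≤ 0
      · simp only [hvdef, if_pos ha, if_neg (not_le.2 hb)]
        exact (hmap _ hbmem).1.le
      · push_neg at ha
        have hamem : min a 1 ∈ Ioc (0:ℝ) 1 := ⟨lt_min ha one_pos, min_le_right _ _⟩
        simp only [hvdef, if_neg (not_le.2 ha), if_neg (not_le.2 hb)]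
        exact hmono hamem hbmem (min_le_min hab le_rfl)
  have hveq : ∀ x ∈ Ioc (0:ℝ) 1, v x = u x := by
    intro x hx
    simp [hvdef, not_le.2 hx.1, min_eq_left hx.2]
  have hvmeas : Measurable v := hvmono.measurable
  have hA : MeasurableSet A := by
    have : A = ((Ioc (0:ℝ) 1 ×ˢ Ioc (0:ℝ) 1) ∩ {p : ℝ × ℝ | p.1 < p.2}) ∩
        {p : ℝ × ℝ | v p.2 ≤ v p.1} := by
      ext p
      simp only [hAdef, mem_setOf_eq, mem_inter_iff, mem_prod]
      constructor
      · rintro ⟨h1, h2, h3, h4⟩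
        exact ⟨⟨⟨h1, h2⟩, h3⟩, by rwa [hveq _ h2, hveq _ h1]⟩
      · rintro ⟨⟨⟨h1, h2⟩, h3⟩, h4⟩
        exact ⟨h1, h2, h3, by rwa [hveq _ h2, hveq _ h1] at h4⟩
    rw [this]
    exact (((measurableSet_Ioc.prod measurableSet_Ioc).inter
      (measurableSet_lt measurable_fst measurable_snd)).inter
      (measurableSet_le (hvmeas.comp measurable_snd) (hvmeas.comp measurable_fst)))
  -- sections
  have hsec1 : ∀ x : ℝ, volume (Prod.mk x ⁻¹' A) =
      (Ioc (0:ℝ) 1).indicator (fun x => ENNReal.ofReal (upperTrace u x - x)) x := by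
    intro x
    by_cases hx : x ∈ Ioc (0:ℝ) 1
    · have h1 : Prod.mk x ⁻¹' A = Ioc x (upperTrace u x) := by
        rw [← sectionA_eq hmono hlc hx]
        ext y
        simp only [hAdef, mem_preimage, mem_setOf_eq]
        tauto
      rw [h1, Real.volume_Ioc, indicator_of_mem hx]
    · have h1 : Prod.mk x ⁻¹' A = ∅ := by
        ext y; simp only [hAdef, mem_preimage, mem_setOf_eq, mem_empty_iff_false, iff_false]
        rintro ⟨h, -⟩; exact hx h
      rw [h1, measure_empty, indicator_of_notMem hx]
  have hsec2 : ∀ y : ℝ, volume ((fun x => (x, y)) ⁻¹' A) =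
      (Ioc (0:ℝ) 1).indicator (fun y => ENNReal.ofReal (y - lowerTrace u y)) y := by
    intro y
    by_cases hy : y ∈ Ioc (0:ℝ) 1
    · have hpre : (fun x => (x, y)) ⁻¹' A = {x | x ∈ Ioc (0:ℝ) 1 ∧ x < y ∧ u y ≤ u x} := by
        ext x; simp only [hAdef, mem_preimage, mem_setOf_eq]; tauto
      rw [hpre, indicator_of_mem hy]
      refine le_antisymm ?_ ?_
      · calc volume {x | x ∈ Ioc (0:ℝ) 1 ∧ x < y ∧ u y ≤ u x}
            ≤ volume (Icc (lowerTrace u y) y) := measure_mono (sectionB_subset hmono hy)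
          _ = ENNReal.ofReal (y - lowerTrace u y) := Real.volume_Icc
      · calc ENNReal.ofReal (y - lowerTrace u y)
            = volume (Ioo (lowerTrace u y) y) := Real.volume_Ioo.symm
          _ ≤ volume {x | x ∈ Ioc (0:ℝ) 1 ∧ x < y ∧ u y ≤ u x} :=
              measure_mono (sectionB_supset hmono hy)
    · have h1 : (fun x => (x, y)) ⁻¹' A = ∅ := by
        ext x; simp only [hAdef, mem_preimage, mem_setOf_eq, mem_empty_iff_false, iff_false]
        rintro ⟨-, h, -⟩; exact hy h
      rw [h1, measure_empty, indicator_of_notMem hy]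
  -- the two expressions for the volume of A
  have hvol1 : (volume : Measure (ℝ × ℝ)) A =
      ∫⁻ x in Ioc (0:ℝ) 1, ENNReal.ofReal (upperTrace u x - x) := by
    rw [Measure.volume_eq_prod, Measure.prod_apply hA]
    rw [← lintegral_indicator measurableSet_Ioc]
    exact lintegral_congr hsec1
  have hvol2 : (volume : Measure (ℝ × ℝ)) A =
      ∫⁻ y in Ioc (0:ℝ) 1, ENNReal.ofReal (y - lowerTrace u y) := by
    rw [Measure.volume_eq_prod, Measure.prod_apply_symm hA]
    rw [← lintegral_indicator measurableSet_Ioc]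
    exact lintegral_congr hsec2
  have hkey : (∫⁻ x in Ioc (0:ℝ) 1, ENNReal.ofReal (upperTrace u x - x)) =
      ∫⁻ y in Ioc (0:ℝ) 1, ENNReal.ofReal (y - lowerTrace u y) := hvol1 ▸ hvol2
  -- convert to Bochner integrals
  have hid : IntegrableOn (fun x : ℝ => x) (Ioc (0:ℝ) 1) volume :=
    continuous_id.integrableOn_Ioc
  have hboundu : ∀ᵐ x ∂(volume.restrict (Ioc (0:ℝ) 1)), ‖upperTrace u x‖ ≤ 1 := by
    rw [ae_restrict_iff' measurableSet_Ioc]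
    filter_upwards with x hx
    rw [Real.norm_eq_abs, abs_le]
    exact ⟨le_trans (by norm_num) (le_trans hx.1.le (le_upperTrace hx)),
      upperTrace_le_one hx⟩
  have hboundl : ∀ᵐ x ∂(volume.restrict (Ioc (0:ℝ) 1)), ‖lowerTrace u x‖ ≤ 1 := by
    rw [ae_restrict_iff' measurableSet_Ioc]
    filter_upwards with x hx
    rw [Real.norm_eq_abs, abs_le]
    exact ⟨le_trans (by norm_num) (lowerTrace_nonneg hx),
      le_trans (lowerTrace_le hx) hx.2⟩
  have hintu : IntegrableOn (upperTrace u) (Ioc (0:ℝ) 1) volume :=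
    Integrable.mono' (integrable_const 1) hmu.aestronglyMeasurable hboundu
  have hintl : IntegrableOn (lowerTrace u) (Ioc (0:ℝ) 1) volume :=
    Integrable.mono' (integrable_const 1) hml.aestronglyMeasurable hboundl
  have hi1 : (∫ x in Ioc (0:ℝ) 1, (upperTrace u x - x)) =
      (∫⁻ x in Ioc (0:ℝ) 1, ENNReal.ofReal (upperTrace u x - x)).toReal := by
    apply integral_eq_lintegral_of_nonneg_ae
    · rw [Filter.EventuallyLE, ae_restrict_iff' measurableSet_Ioc]
      filter_upwards with x hx
      exact sub_nonneg.2 (le_upperTrace hx)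
    · exact (hmu.sub measurable_id).aestronglyMeasurable
  have hi2 : (∫ y in Ioc (0:ℝ) 1, (y - lowerTrace u y)) =
      (∫⁻ y in Ioc (0:ℝ) 1, ENNReal.ofReal (y - lowerTrace u y)).toReal := by
    apply integral_eq_lintegral_of_nonneg_ae
    · rw [Filter.EventuallyLE, ae_restrict_iff' measurableSet_Ioc]
      filter_upwards with x hx
      exact sub_nonneg.2 (lowerTrace_le hx)
    · exact (measurable_id.sub hml).aestronglyMeasurable
  have heq : (∫ x in Ioc (0:ℝ) 1, (upperTrace u x - x)) =
      ∫ y in Ioc (0:ℝ) 1, (y - lowerTrace u y) := by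
    rw [hi1, hi2, hkey]
  rw [integral_sub hintu hid, integral_sub hid hintl] at heq
  have hxint : (∫ x in Ioc (0:ℝ) 1, x) = 1 / 2 := by
    rw [← intervalIntegral.integral_of_le (zero_le_one (α := ℝ)), integral_id]
    norm_num
  rw [hxint] at heq
  linarith
end

section
/- Let K ∈ ℕ and let a = (a₁, …, a_K) ∈ ℝ^K with 0 < a₁ ≤ a₂ ≤ ⋯ ≤ a_K and a_K < 1 (coefficients positive, increasing in index, all less than 1). Let A_a be the K×K companion matrix with ones on the superdiagonal and last row (−a₁, −a₂, …, −a_K). Then the spectral radius of A_a is strictly less than 1. -/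
/-!
An eigenvalue `z` of the companion matrix is a root of `p(z) = z^(n+1) + ∑ aⱼ zʲ`, its
eigenvectors being multiples of `(1, z, …, zⁿ)`. Multiplying `p(z) = 0` by `z - 1` gives
`z^(n+2) = (1 - aₙ) z^(n+1) + a₀ + ∑ (aᵢ₊₁ - aᵢ) z^(i+1)`, a combination of powers of `z` with
nonnegative weights summing to `1`. If `‖z‖ ≥ 1`, each of these powers has norm at most
`‖z^(n+2)‖`, so by strict convexity of the disc the term of positive weight `1 - aₙ` is the left
side itself: `z^(n+1) = z^(n+2)`, hence `z = 1`, which is not a root since `p(1) > 0`.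
-/

/-- The `K × K` companion matrix with ones on the superdiagonal and last row `(-a 0, …, -a (K-1))`. -/
def companion {K : ℕ} (a : Fin K → ℝ) : Matrix (Fin K) (Fin K) ℝ :=
  fun i j => if (i : ℕ) + 1 = (j : ℕ) then 1 else if (i : ℕ) = K - 1 then -a j else 0

open Finset Matrix

theorem eq_of_eq_smul_add_of_norm_le {E : Type*} [NormedAddCommGroup E] [InnerProductSpace ℝ E]
    {u v w : E} {s : ℝ} (hs : 0 < s) (hv : v = s • u + w) (hu : ‖u‖ ≤ ‖v‖)
    (hw : ‖w‖ ≤ (1 - s) * ‖v‖) : u = v := by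
  have hwv : inner ℝ w v ≤ (1 - s) * ‖v‖ ^ 2 :=
    calc inner ℝ w v ≤ ‖w‖ * ‖v‖ := real_inner_le_norm w v
      _ ≤ (1 - s) * ‖v‖ * ‖v‖ := by gcongr
      _ = (1 - s) * ‖v‖ ^ 2 := by ring
  have hvv : ‖v‖ ^ 2 = s * inner ℝ u v + inner ℝ w v := by
    rw [← real_inner_self_eq_norm_sq]
    nth_rewrite 1 [hv]
    rw [inner_add_left, real_inner_smul_left]
  have huv : ‖v‖ ^ 2 ≤ inner ℝ u v := le_of_mul_le_mul_left (by linarith) hs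
  rw [← sub_eq_zero, ← norm_le_zero_iff, ← sq_le_sq₀ (norm_nonneg _) le_rfl, norm_sub_sq_real]
  nlinarith [pow_le_pow_left₀ (norm_nonneg u) hu 2]

theorem sub_one_mul_sum_range_mul_pow {R : Type*} [CommRing R] (b : ℕ → R) (z : R) (n : ℕ) :
    (z - 1) * ∑ j ∈ range (n + 1), b j * z ^ j
      = b n * z ^ (n + 1) - (b 0 + ∑ i ∈ range n, (b (i + 1) - b i) * z ^ (i + 1)) := by
  induction n with
  | zero => simp; ring
  | succ n ih =>
    rw [sum_range_succ, mul_add, ih, sum_range_succ]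
    ring

theorem norm_add_sum_range_sub_mul_pow_le {b : ℕ → ℝ} (hb : Monotone b) (hb0 : 0 ≤ b 0)
    {z : ℂ} (hz : 1 ≤ ‖z‖) {n m : ℕ} (hnm : n ≤ m) :
    ‖(b 0 : ℂ) + ∑ i ∈ range n, ((b (i + 1) - b i : ℝ) : ℂ) * z ^ (i + 1)‖ ≤ b n * ‖z‖ ^ m := by
  have hb_succ (i : ℕ) : 0 ≤ b (i + 1) - b i := sub_nonneg.2 (hb i.le_succ)
  calc _ ≤ ‖(b 0 : ℂ)‖ + ∑ i ∈ range n, ‖((b (i + 1) - b i : ℝ) : ℂ) * z ^ (i + 1)‖ :=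
        (norm_add_le _ _).trans (by gcongr; exact norm_sum_le _ _)
    _ ≤ b 0 * ‖z‖ ^ m + ∑ i ∈ range n, (b (i + 1) - b i) * ‖z‖ ^ m := by
        gcongr with i hi
        · rw [Complex.norm_real, Real.norm_of_nonneg hb0]
          exact le_mul_of_one_le_right hb0 (one_le_pow₀ hz)
        · rw [norm_mul, norm_pow, Complex.norm_real, Real.norm_of_nonneg (hb_succ i)]
          exact mul_le_mul_of_nonneg_left
            (pow_le_pow_right₀ hz ((mem_range.1 hi).trans_le hnm)) (hb_succ i)
    _ = b n * ‖z‖ ^ m := by rw [← sum_mul, sum_range_sub b n]; ring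

theorem norm_lt_one_of_pow_add_sum_eq_zero {n : ℕ} {b : ℕ → ℝ} (hb : Monotone b) (hb0 : 0 ≤ b 0)
    (hbn : b n < 1) {z : ℂ} (hz : z ^ (n + 1) + ∑ j ∈ range (n + 1), (b j : ℂ) * z ^ j = 0) :
    ‖z‖ < 1 := by
  by_contra! hz1
  set w : ℂ := b 0 + ∑ i ∈ range n, ((b (i + 1) - b i : ℝ) : ℂ) * z ^ (i + 1)
  have hshift : z ^ (n + 2) = (1 - b n) • z ^ (n + 1) + w := by
    have := sub_one_mul_sum_range_mul_pow (fun j => (b j : ℂ)) z n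
    push_cast [w, Complex.real_smul] at this ⊢
    linear_combination (z - 1) * hz - this
  have hz0 : z ≠ 0 := norm_pos_iff.1 (one_pos.trans_le hz1)
  have hzz : z ^ (n + 1) = z ^ (n + 2) := by
    refine eq_of_eq_smul_add_of_norm_le (by linarith) hshift ?_ ?_
    · simpa only [norm_pow] using pow_le_pow_right₀ hz1 (n + 1).le_succ
    · rw [sub_sub_cancel, norm_pow]
      exact norm_add_sum_range_sub_mul_pow_le hb hb0 hz1 (n.le_add_right 2)
  have hz_one : z = 1 := by
    rw [pow_succ z (n + 1)] at hzz
    exact (mul_right_eq_self₀.1 hzz.symm).resolve_right (pow_ne_zero _ hz0)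
  have hsum : 0 < 1 + ∑ j ∈ range (n + 1), b j :=
    add_pos_of_pos_of_nonneg one_pos (sum_nonneg fun j _ => hb0.trans (hb j.zero_le))
  subst hz_one
  have hp1 : ((1 + ∑ j ∈ range (n + 1), b j : ℝ) : ℂ) = 0 := by push_cast; simpa using hz
  exact hsum.ne' (Complex.ofReal_eq_zero.1 hp1)

section Companion

variable {A : Type*} [CommRing A] [Algebra ℝ A] {K : ℕ} (a : Fin (K + 1) → ℝ)

theorem companion_map_mulVec_castSucc (v : Fin (K + 1) → A) (i : Fin K) :
    ((companion a).map (algebraMap ℝ A) *ᵥ v) i.castSucc = v i.succ := by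
  have hi : (i : ℕ) ≠ K := i.isLt.ne
  simp [mulVec, dotProduct, companion, hi, ← Fin.val_succ, Fin.val_inj]

theorem companion_map_mulVec_last (v : Fin (K + 1) → A) :
    ((companion a).map (algebraMap ℝ A) *ᵥ v) (Fin.last K) = -∑ j, algebraMap ℝ A (a j) * v j := by
  have hj (j : Fin (K + 1)) : K + 1 ≠ (j : ℕ) := j.isLt.ne'
  simp [mulVec, dotProduct, companion, hj, ← sum_neg_distrib]

theorem eq_pow_mul_of_companion_map_mulVec_eq_smul {v : Fin (K + 1) → A} {z : A}
    (hv : (companion a).map (algebraMap ℝ A) *ᵥ v = z • v) (i : Fin (K + 1)) :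
    v i = z ^ (i : ℕ) * v 0 := by
  induction i using Fin.induction with
  | zero => simp
  | succ i ih =>
    rw [← companion_map_mulVec_castSucc a v i, hv, Pi.smul_apply, ih, smul_eq_mul, Fin.val_succ,
      Fin.val_castSucc, pow_succ']
    ring

end Companion

theorem pow_add_sum_eq_zero_of_isRoot_charpoly_companion {𝕜 : Type*} [Field 𝕜] [Algebra ℝ 𝕜]
    {K : ℕ} (a : Fin (K + 1) → ℝ) {z : 𝕜}
    (hz : ((companion a).map (algebraMap ℝ 𝕜)).charpoly.IsRoot z) :
    z ^ (K + 1) + ∑ j, algebraMap ℝ 𝕜 (a j) * z ^ (j : ℕ) = 0 := by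
  rw [← charpoly_toLin', ← Module.End.hasEigenvalue_iff_isRoot_charpoly] at hz
  obtain ⟨v, hv, hv0⟩ := hz.exists_hasEigenvector
  rw [Module.End.mem_eigenspace_iff, toLin'_apply] at hv
  have hpow := eq_pow_mul_of_companion_map_mulVec_eq_smul a hv
  have hlast := companion_map_mulVec_last a v
  have hsum : ∑ j, algebraMap ℝ 𝕜 (a j) * v j
      = (∑ j, algebraMap ℝ 𝕜 (a j) * z ^ (j : ℕ)) * v 0 := by
    rw [sum_mul]
    exact sum_congr rfl fun j _ => by rw [hpow j, mul_assoc]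
  rw [hv, Pi.smul_apply, smul_eq_mul, hpow, hsum] at hlast
  have hv0 : v 0 ≠ 0 := fun h => hv0 (funext fun i => by rw [hpow, h, mul_zero, Pi.zero_apply])
  refine (mul_eq_zero.1 ?_).resolve_right hv0
  rw [Fin.val_last] at hlast
  linear_combination hlast

theorem stmt12 (K : ℕ) (a : Fin (K + 1) → ℝ)
    (hpos : 0 < a 0) (hmono : Monotone a) (hlast : a (Fin.last K) < 1) :
    ∀ z : ℂ, (((companion a).map (algebraMap ℝ ℂ)).charpoly).IsRoot z → ‖z‖ < 1 := by
  intro z hz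
  have hclamp (j : Fin (K + 1)) : Fin.clamp j K = j := Fin.ext (min_eq_left j.is_le)
  refine norm_lt_one_of_pow_add_sum_eq_zero (n := K) (b := fun j => a (Fin.clamp j K))
    (hmono.comp Fin.clamp_monotone) ?_ ?_ ?_
  · rw [show Fin.clamp 0 K = 0 from Fin.ext (Nat.zero_min K)]
    exact hpos.le
  · rwa [Fin.clamp_eq_last K K le_rfl]
  · rw [← Fin.sum_univ_eq_sum_range (fun j => (a (Fin.clamp j K) : ℂ) * z ^ j)]
    simpa [hclamp, Complex.coe_algebraMap] using
      pow_add_sum_eq_zero_of_isRoot_charpoly_companion a hz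
end

section
/- Let {a^{(j)}}_{j=1}^J be K-dimensional real vectors with all components positive, and set a^{(j)}_{K+1} := 1. Let A_{a^{(j)}} denote the K×K companion matrix with ones on the superdiagonal and last row (−a^{(j)}₁, …, −a^{(j)}_K). Then for any finite product of such matrices A_{a^{(j₁)}} ⋯ A_{a^{(j_k)}}, the spectral radius satisfies SpecRad(∏_{i=1}^k A_{a^{(j_i)}}) ≤ (max_{j,k} a^{(j)}_k / a^{(j)}_{k+1})^k. -/
open Finset Matrix

/-!
Following Key and Volkmer, measure `v : Fin (n + 1) → ℂ` by the diameter of the set of its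
tail sums `u j = ∑_{l ≥ j} v l` (so `u (n + 1) = 0`). The companion matrix of
`0 ≤ b 0 ≤ ⋯ ≤ b n ≤ 1` sends the tail sums of `v` to `u 1, …, u (n + 1), S` translated by `-S`,
where `S = ∑ l, b l * v l` is, by summation by parts, a convex combination of the `u j`; so this
diameter does not grow. Conjugating by `diag (R ^ i)` turns the companion matrix of `a` into `R`
times the companion matrix of `b l = a l / R ^ (n + 1 - l)`, and these `b` satisfy the monotonicity
conditions exactly when `R` bounds the ratios `a l / a (l + 1)` (with `a (n + 1) = 1`). For an
eigenvector of the product with eigenvalue `z` this gives `‖z‖ * diam ≤ R ^ k * diam`, and the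
diameter of a nonzero vector is positive.
-/

lemma exists_mulVec_eq_smul_of_mul_diagonal_eq {ι K : Type*} [Fintype ι] [DecidableEq ι]
    [Field K] {M N : Matrix ι ι K} {d : ι → K} (hd : ∀ i, d i ≠ 0)
    (h : M * diagonal d = diagonal d * N) {z : K} (hz : M.charpoly.IsRoot z) :
    ∃ x ≠ 0, N *ᵥ x = z • x := by
  rw [← charpoly_toLin', ← Module.End.hasEigenvalue_iff_isRoot_charpoly] at hz
  obtain ⟨v, hv⟩ := hz.exists_hasEigenvector
  have hMv : M *ᵥ v = z • v := by simpa using hv.apply_eq_smul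
  set x : ι → K := fun i => v i / d i
  have hx : diagonal d *ᵥ x = v :=
    funext fun i => by simp [mulVec_diagonal, x, mul_div_cancel₀ _ (hd i)]
  refine ⟨x, fun h0 => hv.2 (by rw [← hx, h0, mulVec_zero]),
    funext fun i => mul_left_cancel₀ (hd i) ?_⟩
  have := congrFun (congrArg (· *ᵥ x) h) i
  simp only [← mulVec_mulVec, hx, hMv, mulVec_diagonal] at this
  simp only [← this, Pi.smul_apply, smul_eq_mul, x]
  field_simp [hd i]

lemma list_prod_map_mul_eq_mul_pow_smul {ι R A : Type*} [CommSemiring R] [Semiring A] [Algebra R A]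
    {f g : ι → A} {D : A} {c : R} (h : ∀ j, f j * D = D * (c • g j)) (js : List ι) :
    (js.map f).prod * D = D * (c ^ js.length • (js.map g).prod) := by
  induction js with
  | nil => simp
  | cons j js ih =>
    rw [List.map_cons, List.map_cons, List.prod_cons, List.prod_cons, List.length_cons, mul_assoc,
      ih, ← mul_assoc, h, mul_assoc, smul_mul_smul_comm, pow_succ']

section SummationByParts

variable {E : Type*} [AddCommGroup E] [Module ℝ E]

lemma sum_range_sub_smul_eq_sum_range_smul_sub (G : ℕ → ℝ) (u : ℕ → E) (m : ℕ) :
    ∑ i ∈ range m, (G (i + 1) - G i) • u i =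
      ∑ i ∈ range m, G (i + 1) • (u i - u (i + 1)) + G m • u m - G 0 • u 0 := by
  induction m with
  | zero => simp
  | succ m ih => rw [sum_range_succ, sum_range_succ, ih]; module

lemma sum_range_smul_sub_add_mem_convexHull {G : ℕ → ℝ} (hG : Monotone G) (hG0 : G 0 = 0)
    {m : ℕ} (hGm : G m = 1) (u : ℕ → E) :
    ∑ i ∈ range m, G (i + 1) • (u i - u (i + 1)) + u m ∈ convexHull ℝ (Set.range u) := by
  have h := sum_range_sub_smul_eq_sum_range_smul_sub G u m
  rw [hGm, hG0, one_smul, zero_smul, sub_zero] at h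
  rw [← h]
  exact (convex_convexHull ℝ _).sum_mem (fun i _ => sub_nonneg.2 (hG i.le_succ))
    (by rw [sum_range_sub, hGm, hG0, sub_zero]) fun i _ => subset_convexHull ℝ _ ⟨i, rfl⟩

end SummationByParts

noncomputable def tailSum {n : ℕ} (v : Fin n → ℂ) (j : ℕ) : ℂ :=
  ∑ l : Fin n with j ≤ l.val, v l

noncomputable def tailDiam {n : ℕ} (v : Fin n → ℂ) : ℝ :=
  Metric.diam (Set.range (tailSum v))

section TailSum

variable {n : ℕ} (v : Fin n → ℂ)

lemma tailSum_eq_zero_of_le {j : ℕ} (hj : n ≤ j) : tailSum v j = 0 :=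
  sum_eq_zero fun l hl => by simp at hl; omega

lemma tailSum_sub_tailSum_succ (l : Fin n) : tailSum v l - tailSum v (l + 1) = v l := by
  rw [tailSum, tailSum, sum_filter, sum_filter, ← sum_sub_distrib, Fintype.sum_eq_single l]
  · simp
  · intro m hm
    have : (l : ℕ) ≠ m := fun h => hm (Fin.ext h.symm)
    split_ifs <;> first | omega | simp

lemma tailSum_smul (c : ℂ) (j : ℕ) : tailSum (c • v) j = c * tailSum v j := by
  simp [tailSum, mul_sum]

lemma isBounded_range_tailSum : Bornology.IsBounded (Set.range (tailSum v)) := by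
  refine ((Set.finite_Iic n).image (tailSum v)).isBounded.subset ?_
  rintro _ ⟨j, rfl⟩
  rcases le_total j n with hj | hj
  · exact ⟨j, hj, rfl⟩
  · refine ⟨n, Set.mem_Iic.2 le_rfl, ?_⟩
    rw [tailSum_eq_zero_of_le v le_rfl, tailSum_eq_zero_of_le v hj]

lemma tailDiam_smul (c : ℂ) : tailDiam (c • v) = ‖c‖ * tailDiam v := by
  rw [tailDiam, tailDiam, ← diam_smul₀, Set.smul_set_range]
  simp only [funext (tailSum_smul v c), smul_eq_mul]

lemma tailDiam_pos {v : Fin n → ℂ} (hv : v ≠ 0) : 0 < tailDiam v := by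
  refine Metric.diam_nonneg.lt_of_ne fun h => hv (funext fun l => ?_)
  rw [← tailSum_sub_tailSum_succ v l, Pi.zero_apply, sub_eq_zero, ← dist_le_zero, h]
  exact Metric.dist_le_diam_of_mem (isBounded_range_tailSum v) ⟨_, rfl⟩ ⟨_, rfl⟩

end TailSum

section Companion

variable {n : ℕ}

lemma companion_mulVec_castSucc (b : Fin (n + 1) → ℝ) (v : Fin (n + 1) → ℂ) (i : Fin n) :
    ((companion b).map (algebraMap ℝ ℂ) *ᵥ v) i.castSucc = v i.succ := by
  rw [mulVec, dotProduct, Fintype.sum_eq_single i.succ]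
  · simp [companion]
  · intro l hl
    have : (i : ℕ) + 1 ≠ l := fun h => hl (Fin.ext (by simp [← h]))
    simp [companion, this, i.isLt.ne]

lemma companion_mulVec_last (b : Fin (n + 1) → ℝ) (v : Fin (n + 1) → ℂ) :
    ((companion b).map (algebraMap ℝ ℂ) *ᵥ v) (Fin.last n) = -∑ l, (b l : ℂ) * v l := by
  simp [mulVec, dotProduct, companion, ← sum_neg_distrib, fun l : Fin (n + 1) => l.isLt.ne']

lemma tailSum_companion_mulVec (b : Fin (n + 1) → ℝ) (v : Fin (n + 1) → ℂ) {j : ℕ}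
    (hj : j ≤ n) :
    tailSum ((companion b).map (algebraMap ℝ ℂ) *ᵥ v) j =
      tailSum v (j + 1) - ∑ l, (b l : ℂ) * v l := by
  simp only [tailSum, sum_filter]
  rw [Fin.sum_univ_castSucc, Fin.sum_univ_succ, companion_mulVec_last]
  simp only [companion_mulVec_castSucc]
  simp [hj, sub_eq_add_neg]

lemma sum_mul_mem_convexHull_range_tailSum {b : Fin (n + 1) → ℝ} (hb : Monotone b) (hb0 : 0 ≤ b 0)
    (hb1 : b (Fin.last n) ≤ 1) (v : Fin (n + 1) → ℂ) :
    ∑ l, (b l : ℂ) * v l ∈ convexHull ℝ (Set.range (tailSum v)) := by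
  -- `G (l + 1) = b l`, padded by `G 0 = 0` and `G (n + 2) = 1`: the increments of `G` are
  -- the convex weights of the points `tailSum v i`.
  set G : ℕ → ℝ := fun i => if h : i ≤ n + 1 then (if i = 0 then 0 else b ⟨i - 1, by omega⟩) else 1
  have hG : Monotone G := by
    refine monotone_nat_of_le_succ fun i => ?_
    simp only [G]
    split_ifs
    all_goals first
      | omega
      | contradiction
      | exact zero_le_one
      | exact le_rfl
      | exact hb0.trans (hb (Fin.zero_le _))
      | exact hb (Fin.mk_le_mk.2 (by omega))
      | exact (hb (Fin.le_last _)).trans hb1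
  have h := sum_range_smul_sub_add_mem_convexHull hG (by simp [G]) (m := n + 2) (by simp [G])
    (tailSum v)
  rw [tailSum_eq_zero_of_le v (by omega), add_zero, sum_range_succ,
    tailSum_eq_zero_of_le v le_rfl, tailSum_eq_zero_of_le v (by omega), sub_zero, smul_zero,
    add_zero, ← Fin.sum_univ_eq_sum_range fun i => G (i + 1) • (tailSum v i - tailSum v (i + 1))]
    at h
  convert h using 2 with l
  simp [G, tailSum_sub_tailSum_succ, Complex.real_smul, Nat.lt_succ_iff.1 l.isLt]

lemma tailDiam_companion_mulVec_le {b : Fin (n + 1) → ℝ} (hb : Monotone b) (hb0 : 0 ≤ b 0)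
    (hb1 : b (Fin.last n) ≤ 1) (v : Fin (n + 1) → ℂ) :
    tailDiam ((companion b).map (algebraMap ℝ ℂ) *ᵥ v) ≤ tailDiam v := by
  set H := convexHull ℝ (Set.range (tailSum v))
  set S := ∑ l, (b l : ℂ) * v l
  have hS : S ∈ H := sum_mul_mem_convexHull_range_tailSum hb hb0 hb1 v
  have htail : ∀ j, ∃ x ∈ H, tailSum ((companion b).map (algebraMap ℝ ℂ) *ᵥ v) j = x - S := by
    intro j
    rcases le_or_gt j n with hj | hj
    · exact ⟨_, subset_convexHull ℝ _ ⟨j + 1, rfl⟩, tailSum_companion_mulVec b v hj⟩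
    · exact ⟨S, hS, by rw [tailSum_eq_zero_of_le _ hj, sub_self]⟩
  refine Metric.diam_le_of_forall_dist_le Metric.diam_nonneg ?_
  rintro _ ⟨p, rfl⟩ _ ⟨q, rfl⟩
  obtain ⟨x, hx, hpx⟩ := htail p
  obtain ⟨y, hy, hqy⟩ := htail q
  rw [hpx, hqy, dist_sub_right, tailDiam, ← convexHull_diam]
  exact Metric.dist_le_diam_of_mem (isBounded_convexHull.2 (isBounded_range_tailSum v)) hx hy

lemma monotone_div_pow_of_le_mul {a : Fin (n + 1) → ℝ} {R : ℝ} (hR : 0 < R)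
    (ha : ∀ i : Fin n, a i.castSucc ≤ R * a i.succ) :
    Monotone fun l : Fin (n + 1) => a l / R ^ (n + 1 - l) := by
  refine Fin.monotone_iff_le_succ.2 fun i => ?_
  simp only [Fin.val_castSucc, Fin.val_succ]
  rw [show n + 1 - i = n - i + 1 by omega, show n + 1 - (i + 1) = n - i by omega, pow_succ,
    ← div_div, div_right_comm, div_le_div_iff_of_pos_right (by positivity), div_le_iff₀ hR,
    mul_comm]
  exact ha i

lemma tailDiam_companion_div_pow_mulVec_le {a : Fin (n + 1) → ℝ} {R : ℝ} (hR : 0 < R)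
    (ha0 : 0 ≤ a 0) (ha : ∀ i : Fin n, a i.castSucc ≤ R * a i.succ) (ha_last : a (Fin.last n) ≤ R)
    (v : Fin (n + 1) → ℂ) :
    tailDiam ((companion fun l => a l / R ^ (n + 1 - l)).map (algebraMap ℝ ℂ) *ᵥ v) ≤
      tailDiam v :=
  tailDiam_companion_mulVec_le (monotone_div_pow_of_le_mul hR ha)
    (div_nonneg ha0 (by positivity)) (by simpa [div_le_one hR] using ha_last) v

end Companion

lemma companion_map_mul_diagonal_pow {m : ℕ} (a : Fin m → ℝ) {R : ℝ} (hR : R ≠ 0) :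
    (companion a).map (algebraMap ℝ ℂ) * diagonal (fun i : Fin m => (R : ℂ) ^ (i : ℕ)) =
      diagonal (fun i : Fin m => (R : ℂ) ^ (i : ℕ)) *
        ((R : ℂ) • (companion fun l => a l / R ^ (m - l)).map (algebraMap ℝ ℂ)) := by
  ext i l
  simp only [mul_diagonal, diagonal_mul, Matrix.smul_apply, smul_eq_mul, companion, map_apply]
  split_ifs with h₁ h₂
  · simp [← h₁, pow_succ, mul_comm]
  · have hm : (R : ℂ) * R ^ (i : ℕ) = R ^ (l : ℕ) * R ^ (m - l) := by
      rw [← pow_succ', ← pow_add, h₂]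
      congr 1
      omega
    have hRC : (R : ℂ) ≠ 0 := by exact_mod_cast hR
    push_cast
    field_simp
    linear_combination (a l : ℂ) * hm
  · simp

lemma tailDiam_list_prod_mulVec_le {ι : Type*} {m : ℕ} {f : ι → Matrix (Fin m) (Fin m) ℂ}
    (hf : ∀ j y, tailDiam (f j *ᵥ y) ≤ tailDiam y) (js : List ι) (y : Fin m → ℂ) :
    tailDiam ((js.map f).prod *ᵥ y) ≤ tailDiam y := by
  induction js with
  | nil => simp
  | cons j js ih =>
    rw [List.map_cons, List.prod_cons, ← mulVec_mulVec]
    exact (hf j _).trans ih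

lemma norm_le_of_tailDiam_mulVec_le {m : ℕ} {N : Matrix (Fin m) (Fin m) ℂ} {C : ℝ}
    (hN : ∀ y, tailDiam (N *ᵥ y) ≤ C * tailDiam y) {x : Fin m → ℂ} (hx : x ≠ 0) {z : ℂ}
    (hNx : N *ᵥ x = z • x) : ‖z‖ ≤ C := by
  have h := hN x
  rw [hNx, tailDiam_smul] at h
  exact le_of_mul_le_mul_right h (tailDiam_pos hx)

theorem stmt13 (J K : ℕ) (a : Fin (J + 1) → Fin (K + 1) → ℝ)
    (hpos : ∀ j k, 0 < a j k)
    -- the maximal ratio a^{(j)}_k / a^{(j)}_{k+1}, with the convention a^{(j)}_{K+1} = 1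
    (R : ℝ)
    (hR : R = Finset.univ.sup' (Finset.univ_nonempty)
      (fun p : Fin (J + 1) × Fin (K + 1) =>
        a p.1 p.2 / (if h : (p.2 : ℕ) + 1 < K + 1 then a p.1 ⟨(p.2 : ℕ) + 1, h⟩ else 1)))
    (js : List (Fin (J + 1))) :
    ∀ z : ℂ,
      (((js.map fun j => companion (a j)).prod.map (algebraMap ℝ ℂ)).charpoly).IsRoot z →
        ‖z‖ ≤ R ^ js.length := by
  intro z hz
  have hratio : ∀ p : Fin (J + 1) × Fin (K + 1),
      a p.1 p.2 / (if h : (p.2 : ℕ) + 1 < K + 1 then a p.1 ⟨(p.2 : ℕ) + 1, h⟩ else 1) ≤ R := by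
    subst hR
    intro p
    apply le_sup' _ (mem_univ p)
  have hRpos : 0 < R := (div_pos (hpos 0 0) (by split_ifs <;> simp [hpos])).trans_le (hratio (0, 0))
  have hstep : ∀ j (i : Fin K), a j i.castSucc ≤ R * a j i.succ := fun j i => by
    have h := hratio (j, i.castSucc)
    rw [dif_pos (by simp), div_le_iff₀ (hpos _ _)] at h
    exact h
  have hlast : ∀ j, a j (Fin.last K) ≤ R := fun j => by simpa using hratio (j, Fin.last K)
  rw [← RingHom.mapMatrix_apply, map_list_prod, List.map_map] at hz
  obtain ⟨x, hx, hx_eig⟩ := exists_mulVec_eq_smul_of_mul_diagonal_eq (by simp [hRpos.ne'])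
    (list_prod_map_mul_eq_mul_pow_smul (fun j => companion_map_mul_diagonal_pow (a j) hRpos.ne') js)
    hz
  refine norm_le_of_tailDiam_mulVec_le (fun y => ?_) hx hx_eig
  rw [smul_mulVec, tailDiam_smul, norm_pow, Complex.norm_real, Real.norm_of_nonneg hRpos.le]
  exact mul_le_mul_of_nonneg_left (tailDiam_list_prod_mulVec_le (fun j =>
    tailDiam_companion_div_pow_mulVec_le hRpos (hpos j 0).le (hstep j) (hlast j)) js y)
    (by positivity)
end

section
/- Let N ≥ 2, ℓ₁,…,ℓ_N > 0 with ∑ ℓ_n = 1, let ε > 0, η ∈ (0,1) with εη < 1, and let u = (u₁,…,u_N) satisfy 0 < u₁ ≤ ⋯ ≤ u_N = 1. Define the candidate firing times T⁺ = (1−εη) u₁ + εη ∑_{n=1}^N ℓ_n u_n − η and, if ℓ₁ < 1, T⁻ = (1/(1−ℓ₁)) (∑_{n=2}^N ℓ_n u_n − 1/ε). Then T⁺ ≤ u₁ if and only if T⁻ ≤ T⁺, and T⁺ ≥ u₁ if and only if T⁻ ≥ T⁺; hence the function T_ℓ(u) := T⁺ if T⁺ ≤ u₁ and T_ℓ(u)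 := T⁻ otherwise, is a continuous function of u. -/
open Finset

/-- Candidate firing time assuming the lowest group fires before reaching level 0. -/
noncomputable def Tplus (N : ℕ) (ℓ : ℕ → ℝ) (ε η : ℝ) (v : ℕ → ℝ) : ℝ :=
  (1 - ε * η) * v 1 + ε * η * ∑ n ∈ Icc 1 N, ℓ n * v n - η

/-- Candidate firing time assuming the lowest group reaches level 0 before firing. -/
noncomputable def Tminus (N : ℕ) (ℓ : ℕ → ℝ) (ε : ℝ) (v : ℕ → ℝ) : ℝ :=
  (1 / (1 - ℓ 1)) * ((∑ n ∈ Icc 2 N, ℓ n * v n) - 1 / ε)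

/-- The firing time function: `T⁺` if `T⁺ ≤ v 1`, and `T⁻` otherwise. -/
noncomputable def Tfire (N : ℕ) (ℓ : ℕ → ℝ) (ε η : ℝ) (v : ℕ → ℝ) : ℝ :=
  if Tplus N ℓ ε η v ≤ v 1 then Tplus N ℓ ε η v else Tminus N ℓ ε v

/- The whole statement rests on one identity: with `k = εη(1 - ℓ₁) ∈ (0, 1)`,
`k (T⁻ - T⁺) = (1 - k) (T⁺ - u₁)`. So `T⁻ - T⁺` and `T⁺ - u₁` have the same sign, which gives both
equivalences, and shows that the piecewise firing time is `max T⁺ T⁻`, a continuous function. -/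

lemma sum_Icc_one_eq_add_sum_Icc_two {M : Type*} [AddCommMonoid M] {N : ℕ} (hN : 1 ≤ N)
    (f : ℕ → M) :
    ∑ n ∈ Icc 1 N, f n = f 1 + ∑ n ∈ Icc 2 N, f n := by
  rw [← add_sum_Ioc_eq_sum_Icc hN, ← Icc_add_one_left_eq_Ioc]
  rfl

lemma mul_Tminus_sub_Tplus {N : ℕ} (hN : 1 ≤ N) (ℓ : ℕ → ℝ) {ε : ℝ} (hε : ε ≠ 0) (η : ℝ)
    (hℓ1 : ℓ 1 ≠ 1) (v : ℕ → ℝ) :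
    ε * η * (1 - ℓ 1) * (Tminus N ℓ ε v - Tplus N ℓ ε η v)
      = (1 - ε * η * (1 - ℓ 1)) * (Tplus N ℓ ε η v - v 1) := by
  have hℓ1' : 1 - ℓ 1 ≠ 0 := sub_ne_zero.mpr (Ne.symm hℓ1)
  rw [Tminus, Tplus, sum_Icc_one_eq_add_sum_Icc_two hN]
  field_simp
  ring

section SameSign

variable {p q a b x : ℝ}

lemma le_iff_le_of_mul_sub_eq (hp : 0 < p) (hq : 0 < q) (h : p * (b - a) = q * (a - x)) :
    (a ≤ x ↔ b ≤ a) ∧ (x ≤ a ↔ a ≤ b) := by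
  constructor <;> constructor <;> intro _ <;> nlinarith

lemma max_eq_ite_of_mul_sub_eq (hp : 0 < p) (hq : 0 < q) (h : p * (b - a) = q * (a - x)) :
    max a b = if a ≤ x then a else b := by
  have hsign := le_iff_le_of_mul_sub_eq hp hq h
  split_ifs with hax
  · exact max_eq_left (hsign.1.mp hax)
  · exact max_eq_right (hsign.2.mp (le_of_not_ge hax))

end SameSign

lemma continuous_Tplus (N : ℕ) (ℓ : ℕ → ℝ) (ε η : ℝ) : Continuous (Tplus N ℓ ε η) := by
  unfold Tplus
  fun_prop

lemma continuous_Tminus (N : ℕ) (ℓ : ℕ → ℝ) (ε : ℝ) : Continuous (Tminus N ℓ ε) := by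
  unfold Tminus
  fun_prop

theorem stmt18_general (N : ℕ) (hN : 2 ≤ N) (ℓ : ℕ → ℝ)
    (hℓpos : ∀ n ∈ Icc 1 N, 0 < ℓ n) (hℓ1 : ℓ 1 < 1)
    (ε η : ℝ) (hε : 0 < ε) (hη : η ∈ Set.Ioo (0:ℝ) 1) (hεη : ε * η < 1)
    (u : ℕ → ℝ) :
    ((Tplus N ℓ ε η u ≤ u 1 ↔ Tminus N ℓ ε u ≤ Tplus N ℓ ε η u) ∧
     (u 1 ≤ Tplus N ℓ ε η u ↔ Tplus N ℓ ε η u ≤ Tminus N ℓ ε u)) ∧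
    Continuous (Tfire N ℓ ε η) := by
  have hN1 : 1 ≤ N := by omega
  have hℓ1pos : 0 < ℓ 1 := hℓpos 1 (left_mem_Icc.mpr hN1)
  have hεη0 : 0 < ε * η := mul_pos hε hη.1
  have hk : 0 < ε * η * (1 - ℓ 1) := mul_pos hεη0 (by linarith)
  have hk' : 0 < 1 - ε * η * (1 - ℓ 1) := by nlinarith
  have hid := mul_Tminus_sub_Tplus hN1 ℓ hε.ne' η hℓ1.ne
  refine ⟨le_iff_le_of_mul_sub_eq hk hk' (hid u), ?_⟩
  have hTfire : Tfire N ℓ ε η = fun v => max (Tplus N ℓ ε η v) (Tminus N ℓ ε v) := by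
    funext v
    exact (max_eq_ite_of_mul_sub_eq hk hk' (hid v)).symm
  rw [hTfire]
  exact (continuous_Tplus N ℓ ε η).max (continuous_Tminus N ℓ ε)

theorem stmt18 (N : ℕ) (hN : 2 ≤ N) (ℓ : ℕ → ℝ)
    (hℓpos : ∀ n ∈ Icc 1 N, 0 < ℓ n) (hℓsum : ∑ n ∈ Icc 1 N, ℓ n = 1) (hℓ1 : ℓ 1 < 1)
    (ε η : ℝ) (hε : 0 < ε) (hη : η ∈ Set.Ioo (0:ℝ) 1) (hεη : ε * η < 1)
    (u : ℕ → ℝ) (hu1 : 0 < u 1) (humono : MonotoneOn u (Icc 1 N)) (huN : u N = 1) :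
    ((Tplus N ℓ ε η u ≤ u 1 ↔ Tminus N ℓ ε u ≤ Tplus N ℓ ε η u) ∧
     (u 1 ≤ Tplus N ℓ ε η u ↔ Tplus N ℓ ε η u ≤ Tminus N ℓ ε u)) ∧
    Continuous (Tfire N ℓ ε η) :=
  stmt18_general N hN ℓ hℓpos hℓ1 ε η hε hη hεη u
end
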